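/- arXiv:2304.09496 — 2 statements merged into one kernel-verified Lean document; each statement's English description precedes it below -/
import Mathlib

section
/- Let d, m ∈ ℕ with d, m ≥ 1 and let A, B_1, …, B_m be real d×d matrices. Let p ≥ 2 and T > 0. Then there exist constants κ₁, κ₂ > 0, depending only on p, ‖A‖ and ‖B_1‖,…,‖B_m‖ (in particular independent of t − s), such that for all 0 ≤ s < t ≤ T, if Z_1, …, Z_m are independent real-valued Gaussian random variables each with mean 0 and variance t − s, and S := exp((A − (1/2) Σ_{i=1}^m B_i²)(t − s) + Σ_{i=1}^m Z_i B_i), then 𝔼[‖S‖^p] ≤ κ₁ exp(κ₂ (t − s)). -/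
/-! The exponent `(A − ½ Σ Bᵢ²) h + Σ wᵢ Bᵢ` has norm at most `C h + ‖B‖ Σ |wᵢ|`, where
`‖B‖ = maxᵢ ‖Bᵢ‖`, so `‖S‖ᵖ ≤ e^{pCh} e^{p‖B‖ Σ |wᵢ|}`. Jensen's inequality turns the second
factor into the average of the `e^{m p ‖B‖ |wᵢ|}`, each of which involves a single Gaussian, and
`𝔼 e^{c|Z|} ≤ 𝔼 e^{cZ} + 𝔼 e^{-cZ} = 2 e^{v c²/2}` for `Z ~ N(0, v)`. -/

open MeasureTheory ProbabilityTheory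
open scoped NNReal ENNReal

noncomputable section

/-- The GBM solution operator `S(h, w) = exp((A − ½ Σᵢ Bᵢ²) h + Σᵢ wᵢ Bᵢ)`. -/
def gbmOp {d m : ℕ} (A : EuclideanSpace ℝ (Fin d) →L[ℝ] EuclideanSpace ℝ (Fin d))
    (B : Fin m → (EuclideanSpace ℝ (Fin d) →L[ℝ] EuclideanSpace ℝ (Fin d)))
    (h : ℝ) (w : Fin m → ℝ) : EuclideanSpace ℝ (Fin d) →L[ℝ] EuclideanSpace ℝ (Fin d) :=
  NormedSpace.exp (h • (A - (1 / 2 : ℝ) • ∑ i, B i ^ 2) + ∑ i, w i • B i)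

theorem norm_exp_le_exp_norm {𝔸 : Type*} [NormedRing 𝔸] [NormedAlgebra ℝ 𝔸] [CompleteSpace 𝔸]
    (h1 : ‖(1 : 𝔸)‖ ≤ 1) (x : 𝔸) : ‖NormedSpace.exp x‖ ≤ Real.exp ‖x‖ := by
  rw [Real.exp_eq_exp_ℝ, NormedSpace.exp_eq_tsum (𝕂 := ℝ), NormedSpace.exp_eq_tsum (𝕂 := ℝ)]
  refine (norm_tsum_le_tsum_norm (NormedSpace.norm_expSeries_summable' x)).trans ?_
  refine Summable.tsum_le_tsum (fun n => ?_) (NormedSpace.norm_expSeries_summable' x)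
    (NormedSpace.expSeries_summable' ‖x‖)
  have hpow : ‖x ^ n‖ ≤ ‖x‖ ^ n := by
    rcases n.eq_zero_or_pos with rfl | hn
    · simpa using h1
    · exact norm_pow_le' x hn
  rw [norm_smul, smul_eq_mul, norm_inv, Real.norm_natCast]
  exact mul_le_mul_of_nonneg_left hpow (by positivity)

theorem exp_sum_le_inv_card_mul_sum_exp {ι : Type*} [Fintype ι] [Nonempty ι] (a : ι → ℝ) :
    Real.exp (∑ i, a i) ≤ (Fintype.card ι : ℝ)⁻¹ * ∑ i, Real.exp (Fintype.card ι * a i) := by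
  have hn : (0 : ℝ) < Fintype.card ι := by exact_mod_cast Fintype.card_pos
  have h := convexOn_exp.map_sum_le (t := Finset.univ) (w := fun _ => (Fintype.card ι : ℝ)⁻¹)
    (p := fun i => Fintype.card ι * a i) (fun _ _ => by positivity)
    (by simp [Finset.card_univ, hn.ne']) (fun _ _ => Set.mem_univ _)
  simpa only [smul_eq_mul, ← mul_assoc, inv_mul_cancel₀ hn.ne', one_mul, Finset.mul_sum] using h

section Gaussian

variable {Ω : Type*} {mΩ : MeasurableSpace Ω} {P : Measure Ω} [IsProbabilityMeasure P]
  {X : Ω → ℝ} {v : ℝ≥0}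

theorem lintegral_ofReal_exp_mul_of_map_eq_gaussianReal {μ : ℝ}
    (hX : P.map X = gaussianReal μ v) (t : ℝ) :
    ∫⁻ ω, ENNReal.ofReal (Real.exp (t * X ω)) ∂P
      = ENNReal.ofReal (Real.exp (μ * t + v * t ^ 2 / 2)) := by
  rw [← mgf_gaussianReal hX t, mgf, ofReal_integral_eq_lintegral_ofReal]
  · exact mgf_pos_iff.mp (by rw [mgf_gaussianReal hX]; exact Real.exp_pos _)
  · exact ae_of_all _ fun ω => (Real.exp_pos _).le

theorem lintegral_ofReal_exp_mul_abs_le_of_map_eq_gaussianReal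
    (hX : P.map X = gaussianReal 0 v) (c : ℝ) :
    ∫⁻ ω, ENNReal.ofReal (Real.exp (c * |X ω|)) ∂P
      ≤ 2 * ENNReal.ofReal (Real.exp (v * c ^ 2 / 2)) := by
  have hsplit (x : ℝ) : Real.exp (c * |x|) ≤ Real.exp (c * x) + Real.exp (-c * x) := by
    rcases abs_cases x with ⟨hx, -⟩ | ⟨hx, -⟩ <;> rw [hx]
    · linarith [Real.exp_pos (-c * x)]
    · rw [mul_neg, ← neg_mul]
      linarith [Real.exp_pos (c * x)]
  have hXm : AEMeasurable X P := aemeasurable_of_map_neZero (by rw [hX]; infer_instance)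
  calc ∫⁻ ω, ENNReal.ofReal (Real.exp (c * |X ω|)) ∂P
      ≤ ∫⁻ ω, ENNReal.ofReal (Real.exp (c * X ω)) + ENNReal.ofReal (Real.exp (-c * X ω)) ∂P :=
        lintegral_mono fun ω => (ENNReal.ofReal_le_ofReal (hsplit _)).trans ENNReal.ofReal_add_le
    _ = 2 * ENNReal.ofReal (Real.exp (v * c ^ 2 / 2)) := by
        rw [lintegral_add_left' (hXm.const_mul c).exp.ennreal_ofReal,
          lintegral_ofReal_exp_mul_of_map_eq_gaussianReal hX,
          lintegral_ofReal_exp_mul_of_map_eq_gaussianReal hX]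
        simp [two_mul]

end Gaussian

section Operator

variable {d m : ℕ} (A : EuclideanSpace ℝ (Fin d) →L[ℝ] EuclideanSpace ℝ (Fin d))
  (B : Fin m → (EuclideanSpace ℝ (Fin d) →L[ℝ] EuclideanSpace ℝ (Fin d)))

theorem norm_gbmOp_le (h : ℝ) (w : Fin m → ℝ) :
    ‖gbmOp A B h w‖ ≤ Real.exp (‖A - (1 / 2 : ℝ) • ∑ i, B i ^ 2‖ * |h| + ‖B‖ * ∑ i, |w i|) := by
  refine (norm_exp_le_exp_norm ContinuousLinearMap.norm_id_le _).trans (Real.exp_le_exp.mpr ?_)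
  refine (norm_add_le _ _).trans (add_le_add (by rw [norm_smul, Real.norm_eq_abs, mul_comm]) ?_)
  rw [Finset.mul_sum]
  refine (norm_sum_le _ _).trans (Finset.sum_le_sum fun i _ => ?_)
  rw [norm_smul, Real.norm_eq_abs, mul_comm]
  exact mul_le_mul_of_nonneg_right (norm_le_pi_norm B i) (abs_nonneg _)

theorem norm_gbmOp_rpow_le (hm : 1 ≤ m) {p : ℝ} (hp : 0 ≤ p) (h : ℝ) (w : Fin m → ℝ) :
    ‖gbmOp A B h w‖ ^ p ≤ Real.exp (p * ‖A - (1 / 2 : ℝ) • ∑ i, B i ^ 2‖ * |h|)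
      * ((m : ℝ)⁻¹ * ∑ i, Real.exp (m * p * ‖B‖ * |w i|)) := by
  have : Nonempty (Fin m) := Fin.pos_iff_nonempty.mp hm
  have hjensen := exp_sum_le_inv_card_mul_sum_exp fun i => p * ‖B‖ * |w i|
  simp only [Fintype.card_fin, ← mul_assoc] at hjensen
  calc ‖gbmOp A B h w‖ ^ p
      ≤ Real.exp (‖A - (1 / 2 : ℝ) • ∑ i, B i ^ 2‖ * |h| + ‖B‖ * ∑ i, |w i|) ^ p :=
        Real.rpow_le_rpow (norm_nonneg _) (norm_gbmOp_le A B h w) hp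
    _ = Real.exp (p * ‖A - (1 / 2 : ℝ) • ∑ i, B i ^ 2‖ * |h|)
          * Real.exp (∑ i, p * ‖B‖ * |w i|) := by
        rw [← Real.exp_mul, ← Real.exp_add, add_mul, Finset.mul_sum, Finset.sum_mul]
        ring_nf
    _ ≤ _ := by gcongr

theorem lintegral_nnnorm_gbmOp_rpow_le (hm : 1 ≤ m) {p : ℝ} (hp : 0 ≤ p) {h : ℝ} (hh : 0 ≤ h)
    {Ω : Type*} {mΩ : MeasurableSpace Ω} {P : Measure Ω} [IsProbabilityMeasure P]
    {Z : Fin m → Ω → ℝ} (hZ : ∀ i, P.map (Z i) = gaussianReal 0 h.toNNReal) :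
    ∫⁻ ω, (‖gbmOp A B h fun i => Z i ω‖₊ : ℝ≥0∞) ^ p ∂P
      ≤ ENNReal.ofReal (2 * Real.exp ((p * ‖A - (1 / 2 : ℝ) • ∑ i, B i ^ 2‖
          + (m * p * ‖B‖) ^ 2 / 2) * h)) := by
  set K := Real.exp (p * ‖A - (1 / 2 : ℝ) • ∑ i, B i ^ 2‖ * |h|)
  set c := m * p * ‖B‖
  have hZm (i : Fin m) : AEMeasurable (Z i) P :=
    aemeasurable_of_map_neZero (by rw [hZ i]; infer_instance)
  calc ∫⁻ ω, (‖gbmOp A B h fun i => Z i ω‖₊ : ℝ≥0∞) ^ p ∂P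
      ≤ ∫⁻ ω, ENNReal.ofReal (K * (m : ℝ)⁻¹) * ∑ i, ENNReal.ofReal (Real.exp (c * |Z i ω|)) ∂P := by
        refine lintegral_mono fun ω => ?_
        rw [← ENNReal.ofReal_sum_of_nonneg fun i _ => (Real.exp_pos _).le,
          ← ENNReal.ofReal_mul (by positivity), ← enorm_eq_nnnorm, ← ofReal_norm,
          ENNReal.ofReal_rpow_of_nonneg (norm_nonneg _) hp, mul_assoc]
        exact ENNReal.ofReal_le_ofReal (norm_gbmOp_rpow_le A B hm hp h _)
    _ = ENNReal.ofReal (K * (m : ℝ)⁻¹) * ∑ i, ∫⁻ ω, ENNReal.ofReal (Real.exp (c * |Z i ω|)) ∂P := by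
        rw [lintegral_const_mul' _ _ ENNReal.ofReal_ne_top, lintegral_finsetSum' _ fun i _ =>
          ((hZm i).abs.const_mul c).exp.ennreal_ofReal]
    _ ≤ ENNReal.ofReal (K * (m : ℝ)⁻¹)
          * ∑ _i : Fin m, 2 * ENNReal.ofReal (Real.exp (h * c ^ 2 / 2)) := by
        gcongr with i
        simpa [Real.coe_toNNReal _ hh] using
          lintegral_ofReal_exp_mul_abs_le_of_map_eq_gaussianReal (hZ i) c
    _ = _ := by
        have hm0 : (m : ℝ) ≠ 0 := by positivity
        rw [Finset.sum_const, Finset.card_univ, Fintype.card_fin, nsmul_eq_mul,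
          ← ENNReal.ofReal_natCast, ← mul_assoc, ← ENNReal.ofReal_mul (by positivity),
          inv_mul_cancel_right₀ hm0, mul_left_comm, ← ENNReal.ofReal_mul (by positivity),
          ENNReal.ofReal_mul zero_le_two, ENNReal.ofReal_ofNat, ← Real.exp_add, abs_of_nonneg hh]
        ring_nf

end Operator

theorem gbm_operator_norm_moment_bound_general {d m : ℕ} (hm : 1 ≤ m)
    (A : EuclideanSpace ℝ (Fin d) →L[ℝ] EuclideanSpace ℝ (Fin d))
    (B : Fin m → (EuclideanSpace ℝ (Fin d) →L[ℝ] EuclideanSpace ℝ (Fin d)))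
    (p T : ℝ) (hp : 2 ≤ p) :
    ∃ κ₁ κ₂ : ℝ, 0 < κ₁ ∧ 0 < κ₂ ∧
      ∀ (s t : ℝ), 0 ≤ s → s < t → t ≤ T →
      ∀ (Ω : Type) (mΩ : MeasurableSpace Ω) (P : Measure Ω), IsProbabilityMeasure P →
      ∀ (Z : Fin m → Ω → ℝ), (∀ i, Measurable (Z i)) →
        iIndepFun Z P →
        (∀ i, Measure.map (Z i) P = gaussianReal 0 ((t - s).toNNReal)) →
        ∫⁻ ω, (‖gbmOp A B (t - s) (fun i => Z i ω)‖₊ : ℝ≥0∞) ^ p ∂P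
          ≤ ENNReal.ofReal (κ₁ * Real.exp (κ₂ * (t - s))) := by
  have hp0 : 0 ≤ p := by linarith
  set κ := p * ‖A - (1 / 2 : ℝ) • ∑ i, B i ^ 2‖ + (m * p * ‖B‖) ^ 2 / 2
  have hκ : 0 ≤ κ := add_nonneg (mul_nonneg hp0 (norm_nonneg _)) (by positivity)
  refine ⟨2, κ + 1, two_pos, by linarith, ?_⟩
  intro s t _ hst _ Ω _ P _ Z _ _ hZ
  have hh : 0 ≤ t - s := (sub_pos.mpr hst).le
  refine (lintegral_nnnorm_gbmOp_rpow_le A B hm hp0 hh hZ).trans (ENNReal.ofReal_le_ofReal ?_)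
  gcongr 2 * Real.exp ?_
  exact mul_le_mul_of_nonneg_right (le_add_of_nonneg_right zero_le_one) hh

/-- Moment bound for the (operator norm of the) GBM operator: there exist
constants `κ₁, κ₂ > 0`, independent of `t − s`, with `𝔼‖S(t,s)‖ᵖ ≤ κ₁ exp(κ₂ (t − s))`. -/
theorem gbm_operator_norm_moment_bound {d m : ℕ} (hd : 1 ≤ d) (hm : 1 ≤ m)
    (A : EuclideanSpace ℝ (Fin d) →L[ℝ] EuclideanSpace ℝ (Fin d))
    (B : Fin m → (EuclideanSpace ℝ (Fin d) →L[ℝ] EuclideanSpace ℝ (Fin d)))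
    (p T : ℝ) (hp : 2 ≤ p) (hT : 0 < T) :
    ∃ κ₁ κ₂ : ℝ, 0 < κ₁ ∧ 0 < κ₂ ∧
      ∀ (s t : ℝ), 0 ≤ s → s < t → t ≤ T →
      ∀ (Ω : Type) (mΩ : MeasurableSpace Ω) (P : Measure Ω), IsProbabilityMeasure P →
      ∀ (Z : Fin m → Ω → ℝ), (∀ i, Measurable (Z i)) →
        iIndepFun Z P →
        (∀ i, Measure.map (Z i) P = gaussianReal 0 ((t - s).toNNReal)) →
        ∫⁻ ω, (‖gbmOp A B (t - s) (fun i => Z i ω)‖₊ : ℝ≥0∞) ^ p ∂P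
          ≤ ENNReal.ofReal (κ₁ * Real.exp (κ₂ * (t - s))) :=
  gbm_operator_norm_moment_bound_general hm A B p T hp
end
end

section
/- Let d, m, N ∈ ℕ with d, m, N ≥ 1, T > 0, Δt = T/N, r > 0, K > 0, and let A, B_1, …, B_m be real d×d matrices. Let F, g_1, …, g_m : ℝ^d → ℝ^d satisfy: ‖F(y) − F(0)‖ ≤ K(1 + ‖y‖^{2r})‖y‖ for all y; ⟨y − z, F(y) − F(z)⟩ ≤ K‖y − z‖² for all y, z; and ‖g_i(y) − g_i(z)‖ ≤ K‖y − z‖ for all y, z and all i. Let α : (0,∞) × ℝ^d → ℝ satisfy 0 ≤ α(Δt, y) ≤ 1 for all y. Let λ := max{λ₀, λ₁, λ₂, λ₃, λ₄} be the explicit constant in the context. Let Y ∈ ℝ^d with 1 ≤ ‖Y‖ ≤ N^{1/(4r)} and w ∈ ℝ^m, set β := ⟨Y, Σ_{i=1}^m g_i(Y) w_i⟩ / ‖Y‖² and Y⁺ := S(Δt, w)·( Y + (α(Δt, Y)F(Y) − Σ_{i=1}^m B_i g_i(Y)) Δt + Σ_{i=1}^m g_i(Y) w_i ). Then ‖Y⁺‖²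 ≤ ‖S(Δt, w)‖² ‖Y‖² exp( 2λ/N + 2λ‖w‖² + 2β ). -/
open scoped RealInnerProductSpace

noncomputable section

/-! After the increment `Y ↦ Y + Δt V + G`, with drift `V = α F(Y) − Σᵢ Bᵢ gᵢ(Y)` and diffusion
`G = Σᵢ wᵢ gᵢ(Y)`, expanding the square gives
`‖Y + Δt V + G‖² ≤ ‖Y‖² + 2Δt⟪Y, V⟫ + 2β‖Y‖² + 2Δt²‖V‖² + 2‖G‖²`.
One-sided Lipschitz continuity of `F` and Lipschitz continuity of the `gᵢ` give `⟪Y, V⟫ ≤ c‖Y‖²`,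
and the growth bound on `F` together with `‖Y‖^{2r} ≤ √N` gives `‖V‖ ≤ c√N‖Y‖`, where
`c = λ₂^{1/4} + λ₃^{1/4}`. Since `λ ≥ λ₀ ≥ 1` and `λ ≥ λ₄`, `Tc + T²c² ≤ λ`, so the drift terms are
at most `2λ/N ‖Y‖²`. Cauchy–Schwarz bounds `‖G‖²` by `λ₁‖w‖²‖Y‖²`, and `1 + x ≤ exp x`. -/

section NormedSpace

variable {E E' : Type*} [NormedAddCommGroup E] [NormedSpace ℝ E]
  [NormedAddCommGroup E'] [NormedSpace ℝ E']

theorem norm_sum_apply_le {ι : Type*} [Fintype ι] (B : ι → E →L[ℝ] E') (g : ι → E → E)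
    {K : ℝ} {y : E} (hg : ∀ i, ‖g i y - g i 0‖ ≤ K * ‖y‖) (hy : 1 ≤ ‖y‖) :
    ‖∑ i, B i (g i y)‖ ≤ (∑ i, ‖B i‖ * K + ‖∑ i, B i (g i 0)‖) * ‖y‖ := by
  have hsplit : ∑ i, B i (g i y) = ∑ i, B i (g i y - g i 0) + ∑ i, B i (g i 0) := by
    simp only [map_sub, Finset.sum_sub_distrib, sub_add_cancel]
  have hlin : ‖∑ i, B i (g i y - g i 0)‖ ≤ (∑ i, ‖B i‖ * K) * ‖y‖ := by
    rw [Finset.sum_mul]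
    refine (norm_sum_le _ _).trans (Finset.sum_le_sum fun i _ => ?_)
    calc ‖B i (g i y - g i 0)‖ ≤ ‖B i‖ * ‖g i y - g i 0‖ := (B i).le_opNorm _
      _ ≤ ‖B i‖ * (K * ‖y‖) := by gcongr; exact hg i
      _ = ‖B i‖ * K * ‖y‖ := by ring
  have hconst : ‖∑ i, B i (g i 0)‖ ≤ ‖∑ i, B i (g i 0)‖ * ‖y‖ :=
    le_mul_of_one_le_right (norm_nonneg _) hy
  rw [hsplit, add_mul]
  exact (norm_add_le _ _).trans (add_le_add hlin hconst)

theorem norm_smul_apply_le {F : E → E} {α K ρ s : ℝ} {y : E} (hα : |α| ≤ 1) (hK : 0 ≤ K)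
    (hF : ‖F y - F 0‖ ≤ K * (1 + ρ) * ‖y‖) (hρ : ρ ≤ s) (hs : 1 ≤ s) (hy : 1 ≤ ‖y‖) :
    ‖α • F y‖ ≤ (2 * K + ‖F 0‖) * s * ‖y‖ := by
  have hsy : 1 ≤ s * ‖y‖ := one_le_mul_of_one_le_of_one_le hs hy
  calc ‖α • F y‖ ≤ ‖F y‖ := by
        rw [norm_smul, Real.norm_eq_abs]; exact mul_le_of_le_one_left (norm_nonneg _) hα
    _ ≤ K * (1 + ρ) * ‖y‖ + ‖F 0‖ := by linarith [norm_le_insert' (F y) (F 0)]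
    _ ≤ K * (2 * s) * ‖y‖ + ‖F 0‖ * (s * ‖y‖) := by
        gcongr
        · linarith
        · exact le_mul_of_one_le_right (norm_nonneg _) hsy
    _ = (2 * K + ‖F 0‖) * s * ‖y‖ := by ring

end NormedSpace

theorem rpow_two_mul_le_sqrt {x N r : ℝ} (hr : 0 < r) (hx : 0 ≤ x) (hN : 0 ≤ N)
    (h : x ≤ N ^ (1 / (4 * r))) : x ^ (2 * r) ≤ √N := by
  calc x ^ (2 * r) ≤ (N ^ (1 / (4 * r))) ^ (2 * r) := by gcongr
    _ = √N := by
        rw [← Real.rpow_mul hN, Real.sqrt_eq_rpow]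
        congr 1
        field_simp
        norm_num

theorem sum_le_card_mul_sum {ι : Type*} [Fintype ι] {f : ι → ℝ} (hf : ∀ i, 0 ≤ f i) :
    ∑ i, f i ≤ Fintype.card ι * ∑ i, f i := by
  cases isEmpty_or_nonempty ι
  · simp
  · exact le_mul_of_one_le_left (Finset.sum_nonneg fun i _ => hf i)
      (by exact_mod_cast Fintype.card_pos)

theorem mul_add_sq_mul_sq_le {T a b lam : ℝ} (hT : 0 ≤ T) (ha : 0 ≤ a) (hb : 0 ≤ b)
    (hlam : 1 ≤ lam) (ha4 : a ^ 4 ≤ lam) (hb4 : b ^ 4 ≤ lam)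
    (hT4 : (4 * T ^ 2 + 2 * T) ^ 2 ≤ lam) :
    T * (a + b) + T ^ 2 * (a + b) ^ 2 ≤ lam := by
  set s := √lam
  have hs2 : s ^ 2 = lam := Real.sq_sqrt (by linarith)
  have hs1 : 1 ≤ s := Real.one_le_sqrt.mpr hlam
  have root2 {x : ℝ} (hx : 0 ≤ x) (h : x ^ 2 ≤ lam) : x ≤ s :=
    (Real.le_sqrt hx (by linarith)).mpr h
  have ha2 : a ^ 2 ≤ s := root2 (sq_nonneg a) (by linarith)
  have hb2 : b ^ 2 ≤ s := root2 (sq_nonneg b) (by linarith)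
  have hTs : 4 * T ^ 2 + 2 * T ≤ s := root2 (by positivity) hT4
  -- `(a + b)² ≤ 4s` and, as `s ≥ 1`, also `a + b ≤ 2s`; so the left side is at most
  -- `(2T + 4T²) s ≤ s²`.
  have hab2 : (a + b) ^ 2 ≤ 4 * s := by nlinarith [sq_nonneg (a - b)]
  have hab : a + b ≤ 2 * s := by nlinarith
  calc T * (a + b) + T ^ 2 * (a + b) ^ 2 ≤ T * (2 * s) + T ^ 2 * (4 * s) := by gcongr
    _ = (4 * T ^ 2 + 2 * T) * s := by ring
    _ ≤ s * s := by gcongr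
    _ = lam := by rw [← hs2]; ring

section InnerProductSpace

variable {E : Type*} [NormedAddCommGroup E] [InnerProductSpace ℝ E]

theorem inner_smul_apply_le {F : E → E} {α K : ℝ} {y : E} (hα0 : 0 ≤ α) (hα1 : α ≤ 1)
    (hK : 0 ≤ K) (hF : ⟪y, F y - F 0⟫ ≤ K * ‖y‖ ^ 2) :
    ⟪y, α • F y⟫ ≤ K * ‖y‖ ^ 2 + ‖F 0‖ * ‖y‖ := by
  have hFy : ⟪y, F y⟫ ≤ K * ‖y‖ ^ 2 + ‖F 0‖ * ‖y‖ := by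
    rw [inner_sub_right] at hF
    linarith [real_inner_le_norm y (F 0)]
  have hbound : 0 ≤ K * ‖y‖ ^ 2 + ‖F 0‖ * ‖y‖ := by positivity
  rw [real_inner_smul_right]
  rcases le_total ⟪y, F y⟫ 0 with hneg | hpos
  · exact (mul_nonpos_of_nonneg_of_nonpos hα0 hneg).trans hbound
  · exact (mul_le_of_le_one_left hpos hα1).trans hFy

variable {ι : Type*} [Fintype ι]

theorem inner_tamed_drift_le (F : E → E) (B : ι → E →L[ℝ] E) (g : ι → E → E)
    {α K : ℝ} {y : E} (hα0 : 0 ≤ α) (hα1 : α ≤ 1) (hK : 0 ≤ K) (hy : 1 ≤ ‖y‖)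
    (hF : ⟪y, F y - F 0⟫ ≤ K * ‖y‖ ^ 2) (hg : ∀ i, ‖g i y - g i 0‖ ≤ K * ‖y‖) :
    ⟪y, α • F y - ∑ i, B i (g i y)⟫
      ≤ (2 * K + ‖F 0‖ + (∑ i, ‖B i‖ * K + ‖∑ i, B i (g i 0)‖)) * ‖y‖ ^ 2 := by
  have hFpart := inner_smul_apply_le hα0 hα1 hK hF
  have hBpart : -⟪y, ∑ i, B i (g i y)⟫
      ≤ (∑ i, ‖B i‖ * K + ‖∑ i, B i (g i 0)‖) * ‖y‖ ^ 2 := by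
    calc -⟪y, ∑ i, B i (g i y)⟫ ≤ ‖y‖ * ‖∑ i, B i (g i y)‖ := by
          linarith [abs_real_inner_le_norm y (∑ i, B i (g i y)),
            neg_abs_le ⟪y, ∑ i, B i (g i y)⟫]
      _ ≤ ‖y‖ * ((∑ i, ‖B i‖ * K + ‖∑ i, B i (g i 0)‖) * ‖y‖) := by
          gcongr; exact norm_sum_apply_le B g hg hy
      _ = _ := by ring
  have hy2 : ‖F 0‖ * ‖y‖ ≤ ‖F 0‖ * ‖y‖ ^ 2 := by
    gcongr; exact le_self_pow₀ hy two_ne_zero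
  rw [inner_sub_right]
  nlinarith

theorem norm_tamed_drift_le (F : E → E) (B : ι → E →L[ℝ] E) (g : ι → E → E)
    {α K ρ s : ℝ} {y : E} (hα0 : 0 ≤ α) (hα1 : α ≤ 1) (hK : 0 ≤ K) (hy : 1 ≤ ‖y‖)
    (hρ : ρ ≤ s) (hs : 1 ≤ s) (hF : ‖F y - F 0‖ ≤ K * (1 + ρ) * ‖y‖)
    (hg : ∀ i, ‖g i y - g i 0‖ ≤ K * ‖y‖) :
    ‖α • F y - ∑ i, B i (g i y)‖
      ≤ (2 * K + ‖F 0‖ + (∑ i, ‖B i‖ * K + ‖∑ i, B i (g i 0)‖)) * s * ‖y‖ := by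
  have hFpart := norm_smul_apply_le (abs_le.mpr ⟨by linarith, hα1⟩) hK hF hρ hs hy
  have hBpart := norm_sum_apply_le B g hg hy
  have hb : 0 ≤ ∑ i, ‖B i‖ * K + ‖∑ i, B i (g i 0)‖ := by positivity
  have hBs : (∑ i, ‖B i‖ * K + ‖∑ i, B i (g i 0)‖) * ‖y‖
      ≤ (∑ i, ‖B i‖ * K + ‖∑ i, B i (g i 0)‖) * s * ‖y‖ := by
    gcongr; exact le_mul_of_one_le_right hb hs
  calc ‖α • F y - ∑ i, B i (g i y)‖ ≤ ‖α • F y‖ + ‖∑ i, B i (g i y)‖ := norm_sub_le _ _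
    _ ≤ _ := by linarith

theorem norm_sum_smul_sq_le (g : ι → E → E) (w : EuclideanSpace ℝ ι) {K : ℝ} {y : E}
    (hg : ∀ i, ‖g i y - g i 0‖ ≤ K * ‖y‖) (hy : 1 ≤ ‖y‖) :
    ‖∑ i, w i • g i y‖ ^ 2 ≤ (∑ i, (K + ‖g i 0‖) ^ 2) * ‖w‖ ^ 2 * ‖y‖ ^ 2 := by
  have hgi : ∀ i, ‖g i y‖ ≤ (K + ‖g i 0‖) * ‖y‖ := fun i => by
    nlinarith [norm_le_insert' (g i y) (g i 0), hg i, norm_nonneg (g i 0)]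
  have hsum : ‖∑ i, w i • g i y‖ ≤ (∑ i, |w i| * (K + ‖g i 0‖)) * ‖y‖ := by
    rw [Finset.sum_mul]
    refine (norm_sum_le _ _).trans (Finset.sum_le_sum fun i _ => ?_)
    rw [norm_smul, Real.norm_eq_abs, mul_assoc]
    exact mul_le_mul_of_nonneg_left (hgi i) (abs_nonneg _)
  have hcs : (∑ i, |w i| * (K + ‖g i 0‖)) ^ 2 ≤ ‖w‖ ^ 2 * ∑ i, (K + ‖g i 0‖) ^ 2 := by
    simpa [EuclideanSpace.norm_sq_eq, sq_abs] using
      Finset.sum_mul_sq_le_sq_mul_sq Finset.univ (fun i => |w i|) (fun i => K + ‖g i 0‖)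
  calc ‖∑ i, w i • g i y‖ ^ 2 ≤ ((∑ i, |w i| * (K + ‖g i 0‖)) * ‖y‖) ^ 2 := by gcongr
    _ = (∑ i, |w i| * (K + ‖g i 0‖)) ^ 2 * ‖y‖ ^ 2 := by ring
    _ ≤ (∑ i, (K + ‖g i 0‖) ^ 2) * ‖w‖ ^ 2 * ‖y‖ ^ 2 := by
        rw [mul_comm _ (‖w‖ ^ 2)]; gcongr

theorem norm_add_smul_add_sq_le (y v u : E) (h : ℝ) :
    ‖y + h • v + u‖ ^ 2
      ≤ ‖y‖ ^ 2 + 2 * (h * ⟪y, v⟫) + 2 * ⟪y, u⟫ + 2 * (h ^ 2 * ‖v‖ ^ 2) + 2 * ‖u‖ ^ 2 := by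
  have hpar := parallelogram_law_with_norm ℝ (h • v) u
  have hsmul : ‖h • v‖ ^ 2 = h ^ 2 * ‖v‖ ^ 2 := by
    rw [norm_smul, mul_pow, Real.norm_eq_abs, sq_abs]
  rw [add_assoc, norm_add_sq_real, inner_add_right, real_inner_smul_right]
  nlinarith [sq_nonneg ‖h • v - u‖]

theorem norm_sq_add_smul_add_le_exp {y v u : E} {h p L β : ℝ}
    (hv : h * ⟪y, v⟫ + h ^ 2 * ‖v‖ ^ 2 ≤ p * ‖y‖ ^ 2) (hu : ‖u‖ ^ 2 ≤ L * ‖y‖ ^ 2)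
    (hβ : ⟪y, u⟫ = β * ‖y‖ ^ 2) :
    ‖y + h • v + u‖ ^ 2 ≤ ‖y‖ ^ 2 * Real.exp (2 * p + 2 * L + 2 * β) := by
  calc ‖y + h • v + u‖ ^ 2 ≤ ‖y‖ ^ 2 * (2 * p + 2 * L + 2 * β + 1) := by
        nlinarith [norm_add_smul_add_sq_le y v u h]
    _ ≤ ‖y‖ ^ 2 * Real.exp (2 * p + 2 * L + 2 * β) := by
        gcongr; exact Real.add_one_le_exp _

theorem div_mul_inner_add_sq_le {y v : E} {T N c lam : ℝ} (hT : 0 ≤ T) (hN : 0 < N)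
    (hinner : ⟪y, v⟫ ≤ c * ‖y‖ ^ 2) (hnorm : ‖v‖ ≤ c * √N * ‖y‖)
    (hlam : T * c + T ^ 2 * c ^ 2 ≤ lam) :
    T / N * ⟪y, v⟫ + (T / N) ^ 2 * ‖v‖ ^ 2 ≤ lam / N * ‖y‖ ^ 2 := by
  have hv2 : ‖v‖ ^ 2 ≤ c ^ 2 * N * ‖y‖ ^ 2 := by
    calc ‖v‖ ^ 2 ≤ (c * √N * ‖y‖) ^ 2 := by gcongr
      _ = c ^ 2 * N * ‖y‖ ^ 2 := by rw [mul_pow, mul_pow, Real.sq_sqrt hN.le]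
  calc T / N * ⟪y, v⟫ + (T / N) ^ 2 * ‖v‖ ^ 2
      ≤ T / N * (c * ‖y‖ ^ 2) + (T / N) ^ 2 * (c ^ 2 * N * ‖y‖ ^ 2) := by gcongr
    _ = (T * c + T ^ 2 * c ^ 2) / N * ‖y‖ ^ 2 := by field_simp
    _ ≤ lam / N * ‖y‖ ^ 2 := by gcongr

end InnerProductSpace

theorem tamed_gbm_one_step_bound_large_general {d m N : ℕ}
    (T Δt r K : ℝ) (hT : 0 < T) (hΔt : Δt = T / N) (hr : 0 < r) (hK : 0 < K)
    (A : EuclideanSpace ℝ (Fin d) →L[ℝ] EuclideanSpace ℝ (Fin d))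
    (B : Fin m → (EuclideanSpace ℝ (Fin d) →L[ℝ] EuclideanSpace ℝ (Fin d)))
    (F : EuclideanSpace ℝ (Fin d) → EuclideanSpace ℝ (Fin d))
    (g : Fin m → EuclideanSpace ℝ (Fin d) → EuclideanSpace ℝ (Fin d))
    (hF : ∀ y : EuclideanSpace ℝ (Fin d), ‖F y - F 0‖ ≤ K * (1 + ‖y‖ ^ (2 * r)) * ‖y‖)
    (hFone : ∀ y z : EuclideanSpace ℝ (Fin d), ⟪y - z, F y - F z⟫ ≤ K * ‖y - z‖ ^ 2)
    (hg : ∀ i, ∀ y z : EuclideanSpace ℝ (Fin d), ‖g i y - g i z‖ ≤ K * ‖y - z‖)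
    (α : ℝ → EuclideanSpace ℝ (Fin d) → ℝ)
    (hα : ∀ y, 0 ≤ α Δt y ∧ α Δt y ≤ 1)
    (lam0 lam1 lam2 lam3 lam4 lam : ℝ)
    (hlam0 : lam0 =
      Real.exp ((∑ i, ‖B i‖) + T * ‖A - (1 / 2 : ℝ) • ∑ i, B i ^ 2‖) *
        (1 + 2 * T * K + T * ‖F 0‖ + T * K * (∑ i, ‖B i‖) + T * ‖∑ i, B i (g i 0)‖
          + (m : ℝ) * K + ∑ i, ‖g i 0‖))
    (hlam1 : lam1 = (m : ℝ) * ∑ i, (K + ‖g i 0‖) ^ 2)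
    (hlam2 : lam2 = (2 * K + ‖F 0‖) ^ 4)
    (hlam3 : lam3 = ((∑ i, ‖B i‖ * K) + ‖∑ i, B i (g i 0)‖) ^ 4)
    (hlam4 : lam4 = (4 * T ^ 2 + 2 * T) ^ 2)
    (hlam : lam = max (max (max (max lam0 lam1) lam2) lam3) lam4)
    (Y : EuclideanSpace ℝ (Fin d)) (hY1 : 1 ≤ ‖Y‖) (hY2 : ‖Y‖ ≤ (N : ℝ) ^ ((1 : ℝ) / (4 * r)))
    (w : EuclideanSpace ℝ (Fin m))
    (β : ℝ) (hβ : β = ⟪Y, ∑ i, w i • g i Y⟫ / ‖Y‖ ^ 2) :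
    ‖gbmOp A B Δt (fun i => w i)
        (Y + Δt • (α Δt Y • F Y - ∑ i, B i (g i Y)) + ∑ i, w i • g i Y)‖ ^ 2
      ≤ ‖gbmOp A B Δt (fun i => w i)‖ ^ 2 * ‖Y‖ ^ 2 *
          Real.exp (2 * lam / N + 2 * lam * ‖w‖ ^ 2 + 2 * β) := by
  subst hΔt
  have hρ : ‖Y‖ ^ (2 * r) ≤ √N := rpow_two_mul_le_sqrt hr (norm_nonneg Y) N.cast_nonneg hY2
  have hs : 1 ≤ √(N : ℝ) := (Real.one_le_rpow hY1 (by positivity)).trans hρ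
  have hN : (0 : ℝ) < N := Real.sqrt_pos.mp (by linarith)
  have hFY : ⟪Y, F Y - F 0⟫ ≤ K * ‖Y‖ ^ 2 := by simpa using hFone Y 0
  have hgY : ∀ i, ‖g i Y - g i 0‖ ≤ K * ‖Y‖ := fun i => by simpa using hg i Y 0
  obtain ⟨⟨⟨⟨h0, h1⟩, h2⟩, h3⟩, h4⟩ : (((lam0 ≤ lam ∧ lam1 ≤ lam) ∧ lam2 ≤ lam) ∧ lam3 ≤ lam)
      ∧ lam4 ≤ lam := by simp only [hlam, le_max_iff, le_refl, true_or, or_true, and_self]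
  have hlam_one : 1 ≤ lam := by
    have hB : 0 ≤ ∑ i, ‖B i‖ := Finset.sum_nonneg fun i _ => norm_nonneg _
    have hg0 : 0 ≤ ∑ i, ‖g i 0‖ := Finset.sum_nonneg fun i _ => norm_nonneg _
    refine h0.trans' (hlam0 ▸ one_le_mul_of_one_le_of_one_le (Real.one_le_exp (by positivity)) ?_)
    nlinarith [norm_nonneg (F 0), norm_nonneg (∑ i, B i (g i 0)), m.cast_nonneg (α := ℝ),
      mul_nonneg hT.le hK.le]
  have hc := mul_add_sq_mul_sq_le hT.le (by positivity) (by positivity) hlam_one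
    (hlam2 ▸ h2) (hlam3 ▸ h3) (hlam4 ▸ h4)
  have hG : ‖∑ i, w i • g i Y‖ ^ 2 ≤ lam * ‖w‖ ^ 2 * ‖Y‖ ^ 2 := by
    refine (norm_sum_smul_sq_le g w hgY hY1).trans ?_
    gcongr
    exact (Fintype.card_fin m ▸ sum_le_card_mul_sum fun i => sq_nonneg _).trans (hlam1 ▸ h1)
  have hβY : ⟪Y, ∑ i, w i • g i Y⟫ = β * ‖Y‖ ^ 2 := by
    rw [hβ]; field_simp [norm_pos_iff.mp (one_pos.trans_le hY1)]
  refine (pow_le_pow_left₀ (norm_nonneg _) (ContinuousLinearMap.le_opNorm _ _) 2).trans ?_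
  rw [mul_pow, mul_assoc, mul_div_assoc, mul_assoc 2 lam]
  gcongr
  exact norm_sq_add_smul_add_le_exp (div_mul_inner_add_sq_le hT.le hN
    (inner_tamed_drift_le F B g (hα Y).1 (hα Y).2 hK.le hY1 hFY hgY)
    (norm_tamed_drift_le F B g (hα Y).1 (hα Y).2 hK.le hY1 hρ hs (hF Y) hgY) hc) hG hβY

/-- One-step squared-norm estimate for the tamed GBM scheme on the event
`{1 ≤ ‖Y‖ ≤ N^{1/(4r)}}`:
`‖Y⁺‖² ≤ ‖S(Δt, w)‖² ‖Y‖² exp(2λ/N + 2λ‖w‖² + 2β)`. -/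
theorem tamed_gbm_one_step_bound_large {d m N : ℕ} (hd : 1 ≤ d) (hm : 1 ≤ m) (hN : 1 ≤ N)
    (T Δt r K : ℝ) (hT : 0 < T) (hΔt : Δt = T / N) (hr : 0 < r) (hK : 0 < K)
    (A : EuclideanSpace ℝ (Fin d) →L[ℝ] EuclideanSpace ℝ (Fin d))
    (B : Fin m → (EuclideanSpace ℝ (Fin d) →L[ℝ] EuclideanSpace ℝ (Fin d)))
    (F : EuclideanSpace ℝ (Fin d) → EuclideanSpace ℝ (Fin d))
    (g : Fin m → EuclideanSpace ℝ (Fin d) → EuclideanSpace ℝ (Fin d))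
    (hF : ∀ y : EuclideanSpace ℝ (Fin d), ‖F y - F 0‖ ≤ K * (1 + ‖y‖ ^ (2 * r)) * ‖y‖)
    (hFone : ∀ y z : EuclideanSpace ℝ (Fin d), ⟪y - z, F y - F z⟫ ≤ K * ‖y - z‖ ^ 2)
    (hg : ∀ i, ∀ y z : EuclideanSpace ℝ (Fin d), ‖g i y - g i z‖ ≤ K * ‖y - z‖)
    (α : ℝ → EuclideanSpace ℝ (Fin d) → ℝ)
    (hα : ∀ y, 0 ≤ α Δt y ∧ α Δt y ≤ 1)
    (lam0 lam1 lam2 lam3 lam4 lam : ℝ)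
    (hlam0 : lam0 =
      Real.exp ((∑ i, ‖B i‖) + T * ‖A - (1 / 2 : ℝ) • ∑ i, B i ^ 2‖) *
        (1 + 2 * T * K + T * ‖F 0‖ + T * K * (∑ i, ‖B i‖) + T * ‖∑ i, B i (g i 0)‖
          + (m : ℝ) * K + ∑ i, ‖g i 0‖))
    (hlam1 : lam1 = (m : ℝ) * ∑ i, (K + ‖g i 0‖) ^ 2)
    (hlam2 : lam2 = (2 * K + ‖F 0‖) ^ 4)
    (hlam3 : lam3 = ((∑ i, ‖B i‖ * K) + ‖∑ i, B i (g i 0)‖) ^ 4)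
    (hlam4 : lam4 = (4 * T ^ 2 + 2 * T) ^ 2)
    (hlam : lam = max (max (max (max lam0 lam1) lam2) lam3) lam4)
    (Y : EuclideanSpace ℝ (Fin d)) (hY1 : 1 ≤ ‖Y‖) (hY2 : ‖Y‖ ≤ (N : ℝ) ^ ((1 : ℝ) / (4 * r)))
    (w : EuclideanSpace ℝ (Fin m))
    (β : ℝ) (hβ : β = ⟪Y, ∑ i, w i • g i Y⟫ / ‖Y‖ ^ 2) :
    ‖gbmOp A B Δt (fun i => w i)
        (Y + Δt • (α Δt Y • F Y - ∑ i, B i (g i Y)) + ∑ i, w i • g i Y)‖ ^ 2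
      ≤ ‖gbmOp A B Δt (fun i => w i)‖ ^ 2 * ‖Y‖ ^ 2 *
          Real.exp (2 * lam / N + 2 * lam * ‖w‖ ^ 2 + 2 * β) :=
  tamed_gbm_one_step_bound_large_general T Δt r K hT hΔt hr hK A B F g hF hFone hg α hα lam0 lam1
    lam2 lam3 lam4 lam hlam0 hlam1 hlam2 hlam3 hlam4 hlam Y hY1 hY2 w β hβ
end
end
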